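/- arXiv:2002.12137 — 3 statements merged into one kernel-verified Lean document; each statement's English description precedes it below -/
import Mathlib

section
/- For real n > 1 let w = W_{-1}(−e/n) be the unique w ≤ −1 with w·e^w = −e/n, and let p = −n·w. Then p / (log p − 1) = n. -/
theorem lambert_inversion_identity (n w : ℝ) (hn : 1 < n)
    (hw : w ≤ -1) (heq : w * Real.exp w = -Real.exp 1 / n) :
    (-n * w) / (Real.log (-n * w) - 1) = n := by
  have hn0 : 0 < n := by linarith
  have hw0 : w < 0 := by linarith
  have hnw : 0 < -w := by linarith
  have heq' : (-w) * Real.exp w = Real.exp 1 / n := by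
    field_simp at heq ⊢; linarith [heq]
  have hlog : Real.log (-w) + w = 1 - Real.log n := by
    have := congrArg Real.log heq'
    rw [Real.log_mul (ne_of_gt hnw) (Real.exp_ne_zero w),
      Real.log_exp, Real.log_div (Real.exp_ne_zero 1) (ne_of_gt hn0), Real.log_exp] at this
    linarith
  have hkey : Real.log (-n * w) - 1 = -w := by
    have h1 : -n * w = n * (-w) := by ring
    rw [h1, Real.log_mul (ne_of_gt hn0) (ne_of_gt hnw)]
    linarith
  rw [hkey, neg_mul, div_neg, neg_div, neg_neg]
  rw [mul_div_assoc, div_self (ne_of_lt hw0), mul_one]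
end

section
/- For real n > e^2, one has −n·W_{-1}(−e/n) > n·(log n − 1), where W_{-1}(−e/n) is the unique w ≤ −1 with w·e^w = −e/n. -/
theorem lambert_lower_bound (n w : ℝ) (hn : Real.exp 1 ^ 2 < n)
    (hw : w ≤ -1) (heq : w * Real.exp w = -Real.exp 1 / n) :
    n * (Real.log n - 1) < -n * w := by
  have hexp2 : Real.exp 2 < n := by
    rw [show (2:ℝ) = 1 + 1 by ring, Real.exp_add]; nlinarith [Real.exp_pos 1]
  have hn0 : (0:ℝ) < n := lt_trans (Real.exp_pos 2) hexp2
  have hlog : 2 < Real.log n := by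
    have := Real.log_lt_log (Real.exp_pos 2) hexp2
    rwa [Real.log_exp] at this
  set w0 : ℝ := 1 - Real.log n with hw0def
  have hw0 : w0 < -1 := by simp only [hw0def]; linarith
  -- f is strictly antitone on Iic (-1)
  have hanti : StrictAntiOn (fun x : ℝ => x * Real.exp x) (Set.Iic (-1)) := by
    apply strictAntiOn_of_deriv_neg (convex_Iic _)
    · exact (continuous_id.mul Real.continuous_exp).continuousOn
    · intro x hx
      rw [interior_Iic] at hx
      have hd : HasDerivAt (fun x : ℝ => x * Real.exp x)
          (1 * Real.exp x + x * Real.exp x) x :=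
        (hasDerivAt_id x).mul (Real.hasDerivAt_exp x)
      rw [hd.deriv]
      have : x < -1 := hx
      nlinarith [Real.exp_pos x]
  have hfw0 : w0 * Real.exp w0 = (1 - Real.log n) * (Real.exp 1 / n) := by
    rw [hw0def, show (1 : ℝ) - Real.log n = 1 + (-Real.log n) by ring, Real.exp_add,
      Real.exp_neg, Real.exp_log hn0]
    ring
  have hval : w0 * Real.exp w0 < w * Real.exp w := by
    rw [heq, hfw0, neg_div]
    nlinarith [div_pos (Real.exp_pos 1) hn0]
  have hwlt : w < w0 := by
    by_contra h
    push_neg at h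
    rcases eq_or_lt_of_le h with h' | h'
    · rw [h'] at hval; exact lt_irrefl _ hval
    · have := hanti (Set.mem_Iic.mpr hw0.le) (Set.mem_Iic.mpr hw) h'
      simp only at this
      linarith
  have : Real.log n - 1 < -w := by simp only [hw0def] at hwlt; linarith
  nlinarith
end

section
/- For real n > e^2, let p = −n·W_{-1}(−e/n) (so p/(log p − 1) = n). Then p < n · (log n + log log n) for all sufficiently large n. -/
theorem lambert_upper_bound (Wm1 : ℝ → ℝ)
    (hW : ∀ n : ℝ, Real.exp 1 ^ 2 < n →
      Wm1 n ≤ -1 ∧ Wm1 n * Real.exp (Wm1 n) = -Real.exp 1 / n) :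
    ∀ᶠ n : ℝ in Filter.atTop,
      -n * Wm1 n < n * (Real.log n + Real.log (Real.log n)) := by
  filter_upwards [Filter.eventually_gt_atTop (Real.exp 1 ^ 2)] with n hn
  obtain ⟨hw1, hwe⟩ := hW n hn
  set w := Wm1 n with hwdef
  have he : (0:ℝ) < Real.exp 1 := Real.exp_pos 1
  have hn0 : (0:ℝ) < n := lt_trans (by positivity) hn
  have hlogn : 2 < Real.log n := by
    have := Real.log_lt_log (by positivity) hn
    rwa [Real.log_pow, Real.log_exp, mul_one, Nat.cast_ofNat] at this
  have hlog0 : 0 < Real.log n := by linarith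
  have hll : Real.log (Real.log n) < Real.log n := by
    have := Real.log_le_sub_one_of_pos hlog0
    linarith
  have hll0 : 0 < Real.log (Real.log n) := Real.log_pos (by linarith)
  set L := Real.log n + Real.log (Real.log n) with hL
  have hL1 : 1 ≤ L := by simp only [hL]; linarith
  suffices h : -L < w by nlinarith
  by_contra hc
  push_neg at hc
  -- monotonicity of x * exp x on (-∞, -1]
  have key : (-L) * Real.exp (-L) ≤ w * Real.exp w := by
    have ht : 0 ≤ -L - w := by linarith
    have hexp : 1 + (-L - w) ≤ Real.exp (-L - w) := by
      have := Real.add_one_le_exp (-L - w); linarith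
    have hb : (-L) * Real.exp (-L - w) ≤ w := by
      have h1 : (-L) * Real.exp (-L - w) ≤ (-L) * (1 + (-L - w)) :=
        mul_le_mul_of_nonpos_left hexp (by linarith)
      nlinarith
    calc (-L) * Real.exp (-L) = ((-L) * Real.exp (-L - w)) * Real.exp w := by
          rw [mul_assoc, ← Real.exp_add]; ring_nf
        _ ≤ w * Real.exp w := mul_le_mul_of_nonneg_right hb (Real.exp_pos w).le
  have hexpL : Real.exp (-L) = 1 / (n * Real.log n) := by
    rw [Real.exp_neg, hL, Real.exp_add, Real.exp_log hn0, Real.exp_log hlog0,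
      one_div]
  rw [hwe, hexpL] at key
  -- from -L/(n log n) ≤ -e/n deduce e * log n ≤ L
  have helog : Real.exp 1 * Real.log n ≤ L := by
    have h2 : (-L) * (1 / (n * Real.log n)) * (n * Real.log n) ≤
        (-Real.exp 1 / n) * (n * Real.log n) :=
      mul_le_mul_of_nonneg_right key (by positivity)
    have hl : (-L) * (1 / (n * Real.log n)) * (n * Real.log n) = -L := by
      field_simp
    have hr : (-Real.exp 1 / n) * (n * Real.log n) = -(Real.exp 1 * Real.log n) := by
      field_simp
    rw [hl, hr] at h2
    linarith
  have he2 : 2 < Real.exp 1 := by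
    have := Real.exp_one_gt_d9
    linarith
  nlinarith
end
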